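/- Let (Ω, 𝒢, ℙ) be a probability space, (F_t) a filtration, τ a random time, and G_t := ℙ(τ > t | F_t) with G_t > 0 a.s. for all t. Let 𝒢_t := F_t ∨ σ({τ ≤ u} : u ≤ t) be the progressively enlarged filtration. Then for any t ≤ s and any integrable F_s-measurable random variable U: 𝔼[1_{s < τ}·U | 𝒢_t] = 1_{t < τ}·G_t^{−1}·𝔼[G_s·U | F_t] almost surely. -/

import Mathlib

/-!
On `C = {t < τ}` the enlarged σ-algebra `𝒢_t` has the same trace as `F_t`, so
`E[1_{s<τ} U | 𝒢_t] = 1_C Y` for some `F_t`-measurable `Y`. Conditioning on `F_t` gives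
`E[1_{s<τ} U | F_t] = Y · P(C | F_t) = Y · G_t`, which determines `Y` because `G_t > 0`; and by the
tower property through `F_s`, `E[1_{s<τ} U | F_t] = E[G_s U | F_t]`.
-/

open MeasureTheory

section

variable {Ω : Type*}

theorem MeasurableSpace.comap_subtype_val_sup_generateFrom_le (m : MeasurableSpace Ω)
    {S : Set (Set Ω)} {C : Set Ω} (hS : ∀ A ∈ S, Disjoint C A) :
    (m ⊔ generateFrom S).comap ((↑) : C → Ω) ≤ m.comap (↑) := by
  rw [comap_sup, comap_generateFrom]
  refine sup_le le_rfl (generateFrom_le ?_)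
  rintro _ ⟨A, hA, rfl⟩
  rw [Subtype.preimage_coe_eq_empty.2 (Set.disjoint_iff_inter_eq_empty.1 (hS A hA))]
  exact MeasurableSet.empty

theorem MeasureTheory.StronglyMeasurable.exists_eqOn_of_comap_subtype_val_le
    {β : Type*} [TopologicalSpace β] [TopologicalSpace.IsCompletelyMetrizableSpace β] [Nonempty β]
    {m 𝒢 : MeasurableSpace Ω} {C : Set Ω} (htrace : 𝒢.comap ((↑) : C → Ω) ≤ m.comap (↑))
    {g : Ω → β} (hg : StronglyMeasurable[𝒢] g) :
    ∃ h : Ω → β, StronglyMeasurable[m] h ∧ Set.EqOn g h C := by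
  have hgC : StronglyMeasurable[m.comap (↑)] (g ∘ ((↑) : C → Ω)) :=
    (hg.comp_measurable (comap_measurable _)).mono htrace
  obtain ⟨h, hh, hgh⟩ := hgC.exists_eq_measurable_comp (mY := m)
  exact ⟨h, hh, fun ω hω => congrFun hgh ⟨ω, hω⟩⟩

variable {mΩ : MeasurableSpace Ω} {μ : Measure Ω} [IsFiniteMeasure μ]

theorem MeasureTheory.condExp_indicator_eq_mul_condExp_indicator_one {m : MeasurableSpace Ω}
    {C : Set Ω} (hC : MeasurableSet[mΩ] C) {h : Ω → ℝ} (hh : StronglyMeasurable[m] h)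
    (hint : Integrable (C.indicator h) μ) :
    μ[C.indicator h | m] =ᵐ[μ] h * μ[C.indicator (1 : Ω → ℝ) | m] := by
  have hmul : C.indicator h = h * C.indicator 1 := by
    ext ω
    by_cases hω : ω ∈ C <;> simp [hω]
  rw [hmul] at hint ⊢
  exact condExp_mul_of_stronglyMeasurable_left hh hint ((integrable_const 1).indicator hC)

/-- `htrace` says that `𝒢` and `m` have the same trace on `C`. -/
theorem MeasureTheory.condExp_indicator_eq_of_comap_subtype_val_le {m 𝒢 : MeasurableSpace Ω}
    (hm𝒢 : m ≤ 𝒢) (h𝒢 : 𝒢 ≤ mΩ) {C : Set Ω} (hC : MeasurableSet[𝒢] C)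
    (htrace : 𝒢.comap ((↑) : C → Ω) ≤ m.comap (↑)) {f : Ω → ℝ} (hf : Integrable f μ)
    (hpos : ∀ᵐ ω ∂μ, 0 < μ[C.indicator (1 : Ω → ℝ) | m] ω) :
    μ[C.indicator f | 𝒢] =ᵐ[μ]
      C.indicator (fun ω => (μ[C.indicator (1 : Ω → ℝ) | m] ω)⁻¹ * μ[C.indicator f | m] ω) := by
  obtain ⟨h, hh, hgh⟩ := StronglyMeasurable.exists_eqOn_of_comap_subtype_val_le htrace
    (stronglyMeasurable_condExp (m := 𝒢) (μ := μ) (f := f))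
  have hCh : C.indicator (μ[f | 𝒢]) = C.indicator h := Set.indicator_congr hgh
  have hY : μ[C.indicator f | 𝒢] =ᵐ[μ] C.indicator h := hCh ▸ condExp_indicator hf hC
  have hH : μ[C.indicator f | m] =ᵐ[μ] h * μ[C.indicator (1 : Ω → ℝ) | m] :=
    calc μ[C.indicator f | m] =ᵐ[μ] μ[μ[C.indicator f | 𝒢] | m] :=
          (condExp_condExp_of_le hm𝒢 h𝒢).symm
      _ =ᵐ[μ] μ[C.indicator h | m] := condExp_congr_ae hY
      _ =ᵐ[μ] h * μ[C.indicator (1 : Ω → ℝ) | m] :=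
          condExp_indicator_eq_mul_condExp_indicator_one (h𝒢 _ hC) hh
            (hCh ▸ integrable_condExp.indicator (h𝒢 _ hC))
  filter_upwards [hY, hH, hpos] with ω hYω hHω hposω
  rw [hYω]
  by_cases hω : ω ∈ C
  · rw [Set.indicator_of_mem hω, Set.indicator_of_mem hω, hHω, Pi.mul_apply]
    field_simp
  · simp [hω]

end

section ProgressiveEnlargement

variable {Ω ι : Type*} [LinearOrder ι]

/-- The paper's `𝒢_t`, for the filtration `F` progressively enlarged by `τ` and `m = F_t`. -/
abbrev MeasurableSpace.progressiveEnlargement (m : MeasurableSpace Ω) (τ : Ω → ι) (t : ι) :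
    MeasurableSpace Ω :=
  m ⊔ generateFrom {A | ∃ u ≤ t, A = {ω | τ ω ≤ u}}

namespace MeasurableSpace

theorem progressiveEnlargement_le [TopologicalSpace ι] [ClosedIicTopology ι] [MeasurableSpace ι]
    [OpensMeasurableSpace ι] {mΩ m : MeasurableSpace Ω} (hm : m ≤ mΩ) {τ : Ω → ι}
    (hτ : Measurable[mΩ] τ) (t : ι) : m.progressiveEnlargement τ t ≤ mΩ := by
  refine sup_le hm (generateFrom_le ?_)
  rintro _ ⟨u, -, rfl⟩
  exact hτ measurableSet_Iic

theorem measurableSet_lt_progressiveEnlargement (m : MeasurableSpace Ω) (τ : Ω → ι) (t : ι) :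
    MeasurableSet[m.progressiveEnlargement τ t] {ω | t < τ ω} := by
  have hgen := (measurableSet_generateFrom (s := {A | ∃ u ≤ t, A = {ω | τ ω ≤ u}})
    ⟨t, le_rfl, rfl⟩).compl
  simp only [Set.compl_ofPred, not_le] at hgen
  exact le_sup_right (a := m) _ hgen

theorem comap_subtype_val_progressiveEnlargement_le (m : MeasurableSpace Ω) (τ : Ω → ι) (t : ι) :
    (m.progressiveEnlargement τ t).comap ((↑) : {ω | t < τ ω} → Ω) ≤ m.comap (↑) := by
  refine comap_subtype_val_sup_generateFrom_le m ?_
  rintro _ ⟨u, hu, rfl⟩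
  exact Set.disjoint_left.2 fun ω htω hτω => (hτω.trans hu).not_gt htω

end MeasurableSpace

end ProgressiveEnlargement

open MeasurableSpace in
theorem stmt_13 {Ω : Type*} {mΩ : MeasurableSpace Ω} (μ : Measure Ω)
    [IsProbabilityMeasure μ] (F : ℝ → MeasurableSpace Ω)
    (hmono : ∀ s t : ℝ, s ≤ t → F s ≤ F t) (hle : ∀ t : ℝ, F t ≤ mΩ)
    (τ : Ω → ℝ) (hτ : Measurable τ)
    (G : ℝ → Ω → ℝ)
    (hG : ∀ u : ℝ, G u =ᵐ[μ] μ[Set.indicator {ω | u < τ ω} (fun _ => (1 : ℝ)) | F u])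
    (hGpos : ∀ u : ℝ, ∀ᵐ ω ∂μ, 0 < G u ω)
    (t s : ℝ) (hts : t ≤ s)
    (U : Ω → ℝ) (hU : Measurable[F s] U) (hUint : Integrable U μ) :
    μ[Set.indicator {ω | s < τ ω} U |
        (F t ⊔ MeasurableSpace.generateFrom {A | ∃ u ≤ t, A = {ω | τ ω ≤ u}})]
      =ᵐ[μ]
    Set.indicator {ω | t < τ ω}
      (fun ω => (G t ω)⁻¹ * (μ[fun ω' => G s ω' * U ω' | F t]) ω) := by
  have hCs : MeasurableSet {ω | s < τ ω} := measurableSet_lt measurable_const hτ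
  have hsU : {ω | s < τ ω}.indicator U = {ω | t < τ ω}.indicator ({ω | s < τ ω}.indicator U) := by
    have hsub : {ω | s < τ ω} ⊆ {ω | t < τ ω} := fun ω hω => hts.trans_lt hω
    rw [Set.indicator_indicator, Set.inter_eq_right.2 hsub]
  have hFs : μ[{ω | s < τ ω}.indicator U | F s] =ᵐ[μ] fun ω => G s ω * U ω := by
    filter_upwards [condExp_indicator_eq_mul_condExp_indicator_one hCs hU.stronglyMeasurable
      (hUint.indicator hCs), hG s] with ω hω hGω
    rw [hω, Pi.mul_apply, hGω, mul_comm]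
    rfl
  have hFt : μ[{ω | s < τ ω}.indicator U | F t] =ᵐ[μ] μ[fun ω => G s ω * U ω | F t] :=
    (condExp_condExp_of_le (hmono t s hts) (hle s)).symm.trans (condExp_congr_ae hFs)
  rw [hsU]
  refine (condExp_indicator_eq_of_comap_subtype_val_le le_sup_left
    (progressiveEnlargement_le (hle t) hτ t) (measurableSet_lt_progressiveEnlargement _ τ t)
    (comap_subtype_val_progressiveEnlargement_le _ τ t) (hUint.indicator hCs) ?_).trans ?_
  · filter_upwards [hGpos t, hG t] with ω hpos hGω
    exact hGω ▸ hpos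
  · filter_upwards [hG t, hFt] with ω hGω hFω
    simp only [Set.indicator, ← hsU, hGω, hFω]
    rfl
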